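/- Let I be an Ulrich ideal of A = k⟦t⁵, t¹¹⟧ admitting elements f, g ∈ I with I = (f, g), I² = fI, o(f) = 20 and o(g) = 26. Then there exist α₁, α₂, α₃, α₄, β₁, β₂, ε ∈ k such that I = (t²⁰ + α₁t²¹ + α₂t²² + α₃t²⁷ + α₄t³³, t²⁶ + β₁t²⁷ + β₂t³³) and t³² + εt³³ ∈ I. -/

import Mathlib

noncomputable section

open PowerSeries

set_option synthInstance.maxHeartbeats 400000
set_option maxHeartbeats 800000

variable (k : Type*) [Field k]

/-- The subalgebra of `k⟦t⟧` consisting of power series supported on an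
additive submonoid `S ⊆ ℕ` (the "semigroup ring" of `S`). -/
def semigroupRing (S : AddSubmonoid ℕ) : Subalgebra k (PowerSeries k) where
  carrier := {f | ∀ n : ℕ, coeff n f ≠ 0 → n ∈ S}
  zero_mem' := by intro n hn; simp at hn
  add_mem' := by
    intro f g hf hg n hn
    by_contra h
    exact hn (by
      rw [map_add, of_not_not fun h1 => h (hf n h1), of_not_not fun h2 => h (hg n h2), add_zero])
  one_mem' := by
    intro n hn
    rw [coeff_one] at hn
    simp only [ne_eq, ite_eq_right_iff, not_forall] at hn
    exact hn.1 ▸ S.zero_mem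
  mul_mem' := by
    intro f g hf hg n hn
    rw [coeff_mul] at hn
    obtain ⟨p, hp, hne⟩ := Finset.exists_ne_zero_of_sum_ne_zero hn
    rw [Finset.HasAntidiagonal.mem_antidiagonal] at hp
    exact hp ▸ S.add_mem (hf p.1 (left_ne_zero_of_mul hne)) (hg p.2 (right_ne_zero_of_mul hne))
  algebraMap_mem' := by
    intro a n hn
    have : (algebraMap k (PowerSeries k)) a = C a := rfl
    rw [this, coeff_C] at hn
    simp only [ne_eq, ite_eq_right_iff, not_forall] at hn
    exact hn.1 ▸ S.zero_mem

lemma X_pow_mem {S : AddSubmonoid ℕ} {n : ℕ} (hn : n ∈ S) :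
    (X : PowerSeries k) ^ n ∈ semigroupRing k S := by
  intro m hm
  rw [coeff_X_pow] at hm
  simp only [ne_eq, ite_eq_right_iff, not_forall] at hm
  exact hm.1 ▸ hn

/-- The maximal ideal of a subalgebra of `k⟦t⟧`: the kernel of the constant-coefficient map. -/
def maximalIdealOf (A : Subalgebra k (PowerSeries k)) : Ideal A :=
  RingHom.ker ((constantCoeff : PowerSeries k →+* k).comp A.val.toRingHom)

/-- `I` is an Ulrich ideal of `A`: `I` is `m`-primary, and there is `a ∈ I` such that `(a)`
is a reduction of `I`, `I ≠ (a)`, `I² = aI`, and `I/I²` is a free `A/I`-module. -/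
def IsUlrichIdeal (A : Subalgebra k (PowerSeries k)) (I : Ideal A) : Prop :=
  I.IsPrimary ∧ I.radical = maximalIdealOf k A ∧
  ∃ a ∈ I, (∃ n : ℕ, I ^ (n + 1) = Ideal.span {a} * I ^ n) ∧
    I ≠ Ideal.span {a} ∧
    I ^ 2 = Ideal.span {a} * I ∧
    Module.Free (A ⧸ I) I.Cotangent

/-- `A = k⟦t⁵, t¹¹⟧`. -/
def A511 : Subalgebra k (PowerSeries k) :=
  semigroupRing k (AddSubmonoid.closure ({5, 11} : Set ℕ))

lemma mem511 {n : ℕ} (a b : ℕ) (h : a * 5 + b * 11 = n) :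
    n ∈ AddSubmonoid.closure ({5, 11} : Set ℕ) := by
  subst h
  have h5 : (5 : ℕ) ∈ AddSubmonoid.closure ({5, 11} : Set ℕ) :=
    AddSubmonoid.subset_closure (by norm_num)
  have h11 : (11 : ℕ) ∈ AddSubmonoid.closure ({5, 11} : Set ℕ) :=
    AddSubmonoid.subset_closure (by norm_num)
  simpa [smul_eq_mul] using add_mem (nsmul_mem h5 a) (nsmul_mem h11 b)

/-- `f = t²⁰ + αt²¹ + βt²² + γt²⁷ + δt³³` as an element of `A = k⟦t⁵,t¹¹⟧`. -/
def genF (α β γ δ : k) : A511 k :=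
  ⟨X ^ 20 + α • X ^ 21 + β • X ^ 22 + γ • X ^ 27 + δ • X ^ 33, by
    refine add_mem (add_mem (add_mem (add_mem (X_pow_mem k (mem511 4 0 (by norm_num)))
      (Subalgebra.smul_mem _ (X_pow_mem k (mem511 2 1 (by norm_num))) α))
      (Subalgebra.smul_mem _ (X_pow_mem k (mem511 0 2 (by norm_num))) β))
      (Subalgebra.smul_mem _ (X_pow_mem k (mem511 1 2 (by norm_num))) γ))
      (Subalgebra.smul_mem _ (X_pow_mem k (mem511 0 3 (by norm_num))) δ)⟩

/-- `g = t²⁶ + εt²⁷ + τt³³` as an element of `A = k⟦t⁵,t¹¹⟧`. -/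
def genG (ε τ : k) : A511 k :=
  ⟨X ^ 26 + ε • X ^ 27 + τ • X ^ 33, by
    refine add_mem (add_mem (X_pow_mem k (mem511 3 1 (by norm_num)))
      (Subalgebra.smul_mem _ (X_pow_mem k (mem511 1 2 (by norm_num))) ε))
      (Subalgebra.smul_mem _ (X_pow_mem k (mem511 0 3 (by norm_num))) τ)⟩

/-- `f = t¹⁰ + α₁t¹¹ + α₂t¹⁶ + α₃t²²` as an element of `A = k⟦t⁵,t¹¹⟧`. -/
def genF10 (α₁ α₂ α₃ : k) : A511 k :=
  ⟨X ^ 10 + α₁ • X ^ 11 + α₂ • X ^ 16 + α₃ • X ^ 22, by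
    refine add_mem (add_mem (add_mem (X_pow_mem k (mem511 2 0 (by norm_num)))
      (Subalgebra.smul_mem _ (X_pow_mem k (mem511 0 1 (by norm_num))) α₁))
      (Subalgebra.smul_mem _ (X_pow_mem k (mem511 1 1 (by norm_num))) α₂))
      (Subalgebra.smul_mem _ (X_pow_mem k (mem511 0 2 (by norm_num))) α₃)⟩

/-- `g = t²⁷` as an element of `A = k⟦t⁵,t¹¹⟧`. -/
def genG27 : A511 k :=
  ⟨X ^ 27, X_pow_mem k (mem511 1 2 (by norm_num))⟩

/-- `t³² + εt³³` as an element of `A = k⟦t⁵,t¹¹⟧`. -/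
def elt32 (ε : k) : A511 k :=
  ⟨X ^ 32 + ε • X ^ 33, by
    refine add_mem (X_pow_mem k (mem511 2 2 (by norm_num)))
      (Subalgebra.smul_mem _ (X_pow_mem k (mem511 0 3 (by norm_num))) ε)⟩

/-!
From `I² = fI` one gets `g² = f h`, `g h = f w`, `h² = f u` with `h, w, u ∈ I` of orders
32, 38, 44. Together with `o(f) = 20`, `o(g) = 26` these orders meet every residue class
mod 5, so `I` contains every element of `A` of order at least 40 (the conductor of `⟨5, 11⟩`),
and `I` has elements of each order 25, 26, 30, 31, 32, 35, 36, 37, 38. Subtracting suitable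
elements of `I` normalises `f`, `g`, `h` to power series supported on `{20, 21, 22, 27, 33}`,
`{26, 27, 33}` and `{32, 33}`. The coefficients at `t²⁰, t²⁵, t²⁶` detect the class of an
element of `I` in `I / mI`; they show that the normalised `f` and `g` still generate `I`
modulo `mI`, hence generate `I` by Nakayama's lemma.
-/

section PowerSeriesExpansion

open Finset

variable {k : Type*} [Field k]

/-- The solution `D` of the triangular system `coeff n x = ∑_{j + t = n} D j * coeff t (w j)`,
with `D j = 0` for `j < N`. -/
def triangularCoeff (N : ℕ) (w : ℕ → k⟦X⟧) (x : k⟦X⟧) : ℕ → k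
  | n => if N ≤ n then
      (constantCoeff (w n))⁻¹ *
        (coeff n x - ∑ j : Fin n, triangularCoeff N w x j * coeff (n - j) (w j))
    else 0
  decreasing_by exact j.2

theorem triangularCoeff_of_lt {N : ℕ} {w : ℕ → k⟦X⟧} {x : k⟦X⟧} {n : ℕ} (hn : n < N) :
    triangularCoeff N w x n = 0 := by
  rw [triangularCoeff, if_neg (by omega)]

theorem coeff_eq_sum_triangularCoeff {N : ℕ} {w : ℕ → k⟦X⟧}
    (hw : ∀ j, N ≤ j → constantCoeff (w j) ≠ 0) {x : k⟦X⟧} (hx : ∀ n < N, coeff n x = 0)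
    (n : ℕ) :
    coeff n x = ∑ p ∈ antidiagonal n, triangularCoeff N w x p.1 * coeff p.2 (w p.1) := by
  rw [Finset.Nat.sum_antidiagonal_eq_sum_range_succ_mk, Finset.sum_range_succ, Nat.sub_self,
    coeff_zero_eq_constantCoeff]
  by_cases hn : N ≤ n
  · rw [triangularCoeff, if_pos hn, ← Fin.sum_univ_eq_sum_range
      (fun j => triangularCoeff N w x j * coeff (n - j) (w j)), mul_comm _ (constantCoeff _),
      mul_inv_cancel_left₀ (hw n hn)]
    ring
  · rw [triangularCoeff_of_lt (by omega), zero_mul, add_zero, hx n (by omega)]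
    exact (Finset.sum_eq_zero fun j hj => by
      rw [triangularCoeff_of_lt (by simp at hj; omega), zero_mul]).symm

theorem exists_eq_sum_mul_of_coeff_lt_eq_zero {ι : Type*} [DecidableEq ι] (D : Finset ι)
    (w : ι → k⟦X⟧) (σ : ℕ → ι) {N : ℕ}
    (hσ : ∀ j, N ≤ j → σ j ∈ D ∧ constantCoeff (w (σ j)) ≠ 0) {x : k⟦X⟧}
    (hx : ∀ n < N, coeff n x = 0) :
    ∃ b : ι → k⟦X⟧, (∀ i j, coeff j (b i) ≠ 0 → N ≤ j ∧ σ j = i) ∧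
      x = ∑ i ∈ D, b i * w i := by
  set c := triangularCoeff N (w ∘ σ) x
  have hc : ∀ j, c j ≠ 0 → N ≤ j := fun j hj => by
    by_contra h
    exact hj (triangularCoeff_of_lt (by omega))
  refine ⟨fun i => mk fun j => if σ j = i then c j else 0, fun i j hj => ?_, ?_⟩
  · rw [coeff_mk] at hj
    split_ifs at hj with h
    · exact ⟨hc j hj, h⟩
    · exact absurd rfl hj
  · ext n
    rw [coeff_eq_sum_triangularCoeff (fun j hj => (hσ j hj).2) hx n, map_sum]
    simp only [coeff_mul, coeff_mk, ite_mul, zero_mul]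
    rw [Finset.sum_comm]
    refine Finset.sum_congr rfl fun p _ => ?_
    rw [Finset.sum_ite_eq]
    split_ifs with h
    · rfl
    · rw [triangularCoeff_of_lt, zero_mul]
      by_contra h'
      exact h (hσ p.1 (by omega)).1

theorem eq_sum_coeff_smul_X_pow {x : k⟦X⟧} (s : Finset ℕ) (hs : ∀ n, coeff n x ≠ 0 → n ∈ s) :
    x = ∑ n ∈ s, coeff n x • X ^ n := by
  ext m
  simp only [map_sum, map_smul, coeff_X_pow, smul_eq_mul, mul_ite, mul_one, mul_zero,
    Finset.sum_ite_eq]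
  split_ifs with hm
  · rfl
  · by_contra h
    exact hm (hs m h)

end PowerSeriesExpansion

section SemigroupRing

variable {k : Type*} [Field k]

def valueSet {A : Subalgebra k k⟦X⟧} (I : Ideal A) : Set ℕ :=
  {n | ∃ x ∈ I, order (x : k⟦X⟧) = n}

theorem add_mem_valueSet {A : Subalgebra k k⟦X⟧} {I : Ideal A} {m n : ℕ}
    (hm : (X : k⟦X⟧) ^ m ∈ A) (hn : n ∈ valueSet I) : m + n ∈ valueSet I := by
  obtain ⟨x, hxI, hx⟩ := hn
  refine ⟨⟨X ^ m, hm⟩ * x, I.mul_mem_left _ hxI, ?_⟩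
  rw [Subalgebra.coe_mul, order_mul, order_X_pow, hx, Nat.cast_add]

theorem mem_valueSet_of_sq_eq_span_mul {A : Subalgebra k k⟦X⟧} {I : Ideal A} {a : A}
    (hred : I ^ 2 = Ideal.span {a} * I) {d p q r : ℕ} (ha : order (a : k⟦X⟧) = d)
    (hp : p ∈ valueSet I) (hq : q ∈ valueSet I) (hr : d + r = p + q) : r ∈ valueSet I := by
  obtain ⟨x, hxI, hx⟩ := hp
  obtain ⟨y, hyI, hy⟩ := hq
  have hxy : x * y ∈ Ideal.span {a} * I := hred ▸ pow_two I ▸ Ideal.mul_mem_mul hxI hyI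
  obtain ⟨z, hzI, hz⟩ := Ideal.mem_span_singleton_mul.mp hxy
  have hzo := congrArg (fun u : A => order (u : k⟦X⟧)) hz
  simp only [Subalgebra.coe_mul, order_mul, ha, hx, hy] at hzo
  have hzr : (d : ℕ∞) + order (z : k⟦X⟧) = d + r := hzo.trans (by exact_mod_cast hr.symm)
  exact ⟨z, hzI, WithTop.add_left_cancel (ENat.natCast_ne_top d) hzr⟩

theorem mem_of_coeff_lt_eq_zero {S : AddSubmonoid ℕ} {I : Ideal (semigroupRing k S)} {N : ℕ}
    (D : Finset ℕ) (hD : ∀ d ∈ D, d ∈ valueSet I)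
    (hcover : ∀ j, N ≤ j → ∃ d ∈ D, d ≤ j ∧ j - d ∈ S) (x : semigroupRing k S)
    (hx : ∀ n < N, coeff n (x : k⟦X⟧) = 0) : x ∈ I := by
  choose! e heI he using hD
  choose! σ hσD hσle hσS using hcover
  have hdiv : ∀ d ∈ D, X ^ d * divXPowOrder (e d : k⟦X⟧) = (e d : k⟦X⟧) := fun d hd => by
    simpa [he d hd] using X_pow_order_mul_divXPowOrder (f := (e d : k⟦X⟧))
  obtain ⟨b, hb, hxb⟩ := exists_eq_sum_mul_of_coeff_lt_eq_zero D
    (fun d => divXPowOrder (e d : k⟦X⟧)) σ (fun j hj => ⟨hσD j hj, by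
      rw [constantCoeff_divXPowOrder, he _ (hσD j hj)]
      exact (order_eq_nat.mp (he _ (hσD j hj))).1⟩) hx
  -- `b d` is supported on exponents `j ≥ N` with `σ j = d ≤ j`, so `b d = t^d * a d`, `a d ∈ A`.
  have hbX : ∀ d, b d = X ^ d * PowerSeries.mk fun l => coeff (l + d) (b d) := fun d => by
    ext n
    rw [coeff_X_pow_mul']
    split_ifs with h
    · rw [coeff_mk, Nat.sub_add_cancel h]
    · by_contra hn
      obtain ⟨hNn, rfl⟩ := hb d n hn
      exact h (hσle n hNn)
  let a : ℕ → semigroupRing k S := fun d =>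
    ⟨PowerSeries.mk fun l => coeff (l + d) (b d), fun l hl => by
      obtain ⟨hNl, hσl⟩ := hb d _ (by rwa [coeff_mk] at hl)
      simpa [hσl] using hσS _ hNl⟩
  have hxa : x = ∑ d ∈ D, a d * e d := by
    apply Subtype.ext
    rw [hxb, AddSubmonoidClass.coe_finsetSum]
    refine Finset.sum_congr rfl fun d hd => ?_
    show b d * _ = (PowerSeries.mk fun l => coeff (l + d) (b d)) * (e d : k⟦X⟧)
    conv_rhs => rw [← hdiv d hd]
    nth_rewrite 1 [hbX d]
    ring
  rw [hxa]
  exact Ideal.sum_mem _ fun d hd => I.mul_mem_left _ (heI d hd)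

theorem exists_mem_coeff_sub_eq_zero {S : AddSubmonoid ℕ} {I : Ideal (semigroupRing k S)}
    {N : ℕ} {T : Set ℕ}
    (hN : ∀ x : semigroupRing k S, (∀ n < N, coeff n (x : k⟦X⟧) = 0) → x ∈ I)
    (hT : T ⊆ valueSet I) (x : semigroupRing k S) (s : ℕ) :
    ∃ z ∈ I, (∀ n < s, coeff n (z : k⟦X⟧) = 0) ∧
      ∀ n, s ≤ n → n ∈ T ∨ N ≤ n → coeff n ((x : k⟦X⟧) - (z : k⟦X⟧)) = 0 := by
  obtain ⟨j, hj⟩ : ∃ j, N - s = j := ⟨_, rfl⟩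
  induction j generalizing x s with
  | zero =>
    let z : semigroupRing k S := ⟨PowerSeries.mk fun n => if s ≤ n then coeff n (x : k⟦X⟧) else 0,
      fun n hn => x.2 n (by rw [coeff_mk] at hn; split_ifs at hn; exacts [hn, absurd rfl hn])⟩
    have hz : ∀ n, coeff n (z : k⟦X⟧) = if s ≤ n then coeff n (x : k⟦X⟧) else 0 :=
      fun n => by simp only [z, coeff_mk]
    refine ⟨z, hN z fun n hn => ?_, fun n hn => ?_, fun n hn _ => ?_⟩
    · rw [hz, if_neg (by omega)]
    · rw [hz, if_neg (by omega)]
    · rw [map_sub, hz, if_pos hn, sub_self]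
  | succ j ih =>
    by_cases hs : s ∈ T
    · obtain ⟨e, heI, he⟩ := hT hs
      obtain ⟨he_s, he_lt⟩ := order_eq_nat.mp he
      set α := coeff s (x : k⟦X⟧) / coeff s (e : k⟦X⟧)
      obtain ⟨z, hzI, hz_lt, hz⟩ := ih (x - α • e) (s + 1) (by omega)
      refine ⟨z + α • e, add_mem hzI (I.smul_of_tower_mem α heI), fun n hn => ?_,
        fun n hn hnT => ?_⟩
      · simp [hz_lt n (by omega), he_lt n hn]
      · have hsub : (x : k⟦X⟧) - ↑(z + α • e) = ↑(x - α • e) - (z : k⟦X⟧) := by push_cast; abel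
        rw [hsub]
        rcases hn.eq_or_lt with rfl | hn
        · simp [hz_lt s (by omega), α, div_mul_cancel₀ _ he_s]
        · exact hz n hn hnT
    · obtain ⟨z, hzI, hz_lt, hz⟩ := ih x (s + 1) (by omega)
      refine ⟨z, hzI, fun n hn => hz_lt n (by omega), fun n hn hnT => ?_⟩
      rcases hn.eq_or_lt with rfl | hn
      · exact absurd (hnT.resolve_left hs) (by omega)
      · exact hz n hn hnT

theorem inv_mem_semigroupRing {S : AddSubmonoid ℕ} {x : k⟦X⟧} (hx : x ∈ semigroupRing k S) :
    x⁻¹ ∈ semigroupRing k S := by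
  intro n
  induction n using Nat.strong_induction_on with
  | _ n ih =>
    intro hn
    by_contra hnS
    apply hn
    rw [coeff_inv, if_neg (by rintro rfl; exact hnS S.zero_mem), mul_eq_zero]
    refine Or.inr (Finset.sum_eq_zero fun p hp => ?_)
    rw [Finset.HasAntidiagonal.mem_antidiagonal] at hp
    split_ifs with hp2
    · by_contra hne
      exact hnS (hp ▸ S.add_mem (hx p.1 (left_ne_zero_of_mul hne))
        (ih p.2 hp2 (right_ne_zero_of_mul hne)))
    · rfl

theorem isUnit_of_constantCoeff_ne_zero {S : AddSubmonoid ℕ} {x : semigroupRing k S}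
    (hx : constantCoeff (x : k⟦X⟧) ≠ 0) : IsUnit x :=
  IsUnit.of_mul_eq_one (b := ⟨(x : k⟦X⟧)⁻¹, inv_mem_semigroupRing x.2⟩)
    (Subtype.ext (PowerSeries.mul_inv_cancel _ hx))

theorem mem_maximalIdealOf_iff {A : Subalgebra k k⟦X⟧} {x : A} :
    x ∈ maximalIdealOf k A ↔ constantCoeff (x : k⟦X⟧) = 0 :=
  Iff.rfl

theorem maximalIdealOf_le_jacobson_bot {S : AddSubmonoid ℕ} :
    maximalIdealOf k (semigroupRing k S) ≤ (⊥ : Ideal (semigroupRing k S)).jacobson := by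
  intro x hx
  rw [Ideal.mem_jacobson_bot]
  intro y
  apply isUnit_of_constantCoeff_ne_zero
  rw [mem_maximalIdealOf_iff] at hx
  simp [hx]

end SemigroupRing

section FiveEleven

variable {k : Type*} [Field k] {I : Ideal (A511 k)} {f g : A511 k}

local notation "H" => AddSubmonoid.closure ({5, 11} : Set ℕ)

theorem mem_closure_five_eleven_iff {n : ℕ} : n ∈ H ↔ ∃ a b : ℕ, a * 5 + b * 11 = n := by
  simp [AddSubmonoid.mem_closure_pair]

theorem mem_of_mem_closure_five_eleven_of_lt_forty {n : ℕ} (hn : n ∈ H) (h40 : n < 40) :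
    n ∈ ({0, 5, 10, 11, 15, 16, 20, 21, 22, 25, 26, 27, 30, 31, 32, 33, 35, 36, 37, 38} :
      Finset ℕ) := by
  obtain ⟨a, b, rfl⟩ := mem_closure_five_eleven_iff.mp hn
  have hb : b ≤ 3 := by omega
  interval_cases b <;> simp <;> omega

theorem coeff_A511_eq_zero_of_lt_ten (p : A511 k) {i : ℕ} (hi : i < 10) (h0 : i ≠ 0)
    (h5 : i ≠ 5) : coeff i (p : k⟦X⟧) = 0 := by
  by_contra hp
  have := mem_of_mem_closure_five_eleven_of_lt_forty (p.2 i hp) (by omega)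
  simp at this
  omega

theorem exists_coe_eq_add_X_pow_ten_mul (p : A511 k) : ∃ r : k⟦X⟧,
    (p : k⟦X⟧) = C (coeff 0 (p : k⟦X⟧)) + C (coeff 5 (p : k⟦X⟧)) * X ^ 5 + X ^ 10 * r := by
  have hdvd : X ^ 10 ∣ (p : k⟦X⟧) - C (coeff 0 (p : k⟦X⟧)) - C (coeff 5 (p : k⟦X⟧)) * X ^ 5 := by
    rw [X_pow_dvd_iff]
    intro i hi
    simp only [map_sub, coeff_C, coeff_C_mul_X_pow]
    by_cases h0 : i = 0
    · subst h0; simp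
    by_cases h5 : i = 5
    · subst h5; simp
    simp [h0, h5, coeff_A511_eq_zero_of_lt_ten p hi h0 h5]
  obtain ⟨r, hr⟩ := hdvd
  exact ⟨r, by rw [← hr]; ring⟩

theorem coeff_A511_mul_of_lt (p : A511 k) {x : k⟦X⟧} {N n : ℕ} (hx : ∀ j < N, coeff j x = 0)
    (h5 : 5 ≤ n) (hn : n < N + 10) :
    coeff n ((p : k⟦X⟧) * x) =
      coeff 0 (p : k⟦X⟧) * coeff n x + coeff 5 (p : k⟦X⟧) * coeff (n - 5) x := by
  obtain ⟨r, hr⟩ := exists_coe_eq_add_X_pow_ten_mul p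
  obtain ⟨y, rfl⟩ := X_pow_dvd_iff.mpr hx
  have htail : coeff n (X ^ 10 * r * (X ^ N * y)) = 0 := by
    rw [show X ^ 10 * r * (X ^ N * y) = X ^ (10 + N) * (r * y) by ring, coeff_X_pow_mul',
      if_neg (by omega)]
  conv_lhs => rw [hr]
  rw [add_mul, add_mul, map_add, map_add, htail, add_zero, coeff_C_mul, mul_assoc,
    coeff_C_mul, mul_comm (X ^ 5), coeff_mul_X_pow' _ 5, if_pos h5]

theorem exists_sub_smul_add_smul_mem_maximalIdealOf_mul (hI : I = Ideal.span {f, g})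
    (hof : order (f : k⟦X⟧) = 20) (hog : order (g : k⟦X⟧) = 26) {y : A511 k} (hy : y ∈ I) :
    ∃ α β γ : k, y - (α • f + β • g) ∈ maximalIdealOf k (A511 k) * I ∧
      coeff 20 (y : k⟦X⟧) = α * coeff 20 (f : k⟦X⟧) ∧
      coeff 25 (y : k⟦X⟧) = α * coeff 25 (f : k⟦X⟧) + γ * coeff 20 (f : k⟦X⟧) ∧
      coeff 26 (y : k⟦X⟧) =
        α * coeff 26 (f : k⟦X⟧) + γ * coeff 21 (f : k⟦X⟧) + β * coeff 26 (g : k⟦X⟧) := by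
  have hf := (order_eq_nat.mp hof).2
  have hg := (order_eq_nat.mp hog).2
  have hfI : f ∈ I := hI ▸ Ideal.subset_span (by simp)
  have hgI : g ∈ I := hI ▸ Ideal.subset_span (by simp)
  rw [hI] at hy
  obtain ⟨p, q, rfl⟩ := Ideal.mem_span_pair.mp hy
  have hm : ∀ r : A511 k, r - algebraMap k (A511 k) (constantCoeff (r : k⟦X⟧)) ∈
      maximalIdealOf k (A511 k) := fun r => by
    simp [mem_maximalIdealOf_iff]
  refine ⟨constantCoeff (p : k⟦X⟧), constantCoeff (q : k⟦X⟧), coeff 5 (p : k⟦X⟧), ?_, ?_, ?_, ?_⟩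
  · have hsplit : p * f + q * g - (constantCoeff (p : k⟦X⟧) • f + constantCoeff (q : k⟦X⟧) • g) =
        (p - algebraMap k _ (constantCoeff (p : k⟦X⟧))) * f +
          (q - algebraMap k _ (constantCoeff (q : k⟦X⟧))) * g := by
      simp only [Algebra.smul_def]; ring
    rw [hsplit]
    exact add_mem (Ideal.mul_mem_mul (hm p) hfI) (Ideal.mul_mem_mul (hm q) hgI)
  all_goals
    simp only [Subalgebra.coe_add, Subalgebra.coe_mul, map_add]
    rw [coeff_A511_mul_of_lt p hf (by norm_num) (by norm_num),
      coeff_A511_mul_of_lt q hg (by norm_num) (by norm_num)]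
    simp [hf, hg]

theorem exists_sub_smul_mem_maximalIdealOf_mul (hI : I = Ideal.span {f, g})
    (hof : order (f : k⟦X⟧) = 20) (hog : order (g : k⟦X⟧) = 26) {y : A511 k} (hy : y ∈ I)
    (hy20 : coeff 20 (y : k⟦X⟧) = 0) : ∃ β : k, y - β • g ∈ maximalIdealOf k (A511 k) * I := by
  obtain ⟨α, β, -, hmem, h20, -⟩ := exists_sub_smul_add_smul_mem_maximalIdealOf_mul hI hof hog hy
  have hα : α = 0 := by simpa [hy20, (order_eq_nat.mp hof).1] using h20
  exact ⟨β, by simpa [hα] using hmem⟩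

theorem mem_maximalIdealOf_mul_of_coeff_eq_zero (hI : I = Ideal.span {f, g})
    (hof : order (f : k⟦X⟧) = 20) (hog : order (g : k⟦X⟧) = 26) {y : A511 k} (hy : y ∈ I)
    (hy26 : ∀ n ≤ 26, coeff n (y : k⟦X⟧) = 0) : y ∈ maximalIdealOf k (A511 k) * I := by
  obtain ⟨α, β, γ, hmem, h20, h25, h26⟩ :=
    exists_sub_smul_add_smul_mem_maximalIdealOf_mul hI hof hog hy
  have hf20 := (order_eq_nat.mp hof).1
  have hα : α = 0 := by simpa [hy26 20 (by norm_num), hf20] using h20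
  have hγ : γ = 0 := by simpa [hy26 25 (by norm_num), hα, hf20] using h25
  have hβ : β = 0 := by
    simpa [hy26 26 le_rfl, hα, hγ, (order_eq_nat.mp hog).1] using h26
  simpa [hα, hβ] using hmem

theorem eq_span_inv_smul_sub (hI : I = Ideal.span {f, g})
    (hof : order (f : k⟦X⟧) = 20) (hog : order (g : k⟦X⟧) = 26) {zf zg : A511 k}
    (hzfI : zf ∈ I) (hzgI : zg ∈ I) (hzf : coeff 20 (zf : k⟦X⟧) = 0)
    (hzg : ∀ n ≤ 26, coeff n (zg : k⟦X⟧) = 0) :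
    I = Ideal.span {(coeff 20 (f : k⟦X⟧))⁻¹ • f - zf, (coeff 26 (g : k⟦X⟧))⁻¹ • g - zg} := by
  set c := coeff 20 (f : k⟦X⟧)
  set d := coeff 26 (g : k⟦X⟧)
  have hc : c ≠ 0 := (order_eq_nat.mp hof).1
  have hd : d ≠ 0 := (order_eq_nat.mp hog).1
  set J := Ideal.span {c⁻¹ • f - zf, d⁻¹ • g - zg}
  set m := maximalIdealOf k (A511 k)
  have hfI : f ∈ I := hI ▸ Ideal.subset_span (by simp)
  have hgI : g ∈ I := hI ▸ Ideal.subset_span (by simp)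
  have hFJ : c⁻¹ • f - zf ∈ J := Ideal.subset_span (by simp)
  have hGJ : d⁻¹ • g - zg ∈ J := Ideal.subset_span (by simp)
  have hzgm : zg ∈ m * I := mem_maximalIdealOf_mul_of_coeff_eq_zero hI hof hog hzgI hzg
  have hgJ : g ∈ J ⊔ m * I := by
    have hg : g = d • (d⁻¹ • g - zg) + d • zg := by
      rw [smul_sub, smul_smul, mul_inv_cancel₀ hd, one_smul, sub_add_cancel]
    rw [hg]
    exact add_mem (Ideal.mem_sup_left (J.smul_of_tower_mem d hGJ))
      (Ideal.mem_sup_right ((m * I).smul_of_tower_mem d hzgm))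
  obtain ⟨β, hβ⟩ := exists_sub_smul_mem_maximalIdealOf_mul hI hof hog hzfI hzf
  have hfJ : f ∈ J ⊔ m * I := by
    have hf : f = c • (c⁻¹ • f - zf) + (c * β) • g + c • (zf - β • g) := by
      rw [smul_sub, smul_sub, smul_smul, smul_smul, mul_inv_cancel₀ hc, one_smul]
      abel
    rw [hf]
    exact add_mem (add_mem (Ideal.mem_sup_left (J.smul_of_tower_mem c hFJ))
      ((J ⊔ m * I).smul_of_tower_mem _ hgJ)) (Ideal.mem_sup_right ((m * I).smul_of_tower_mem c hβ))
  refine le_antisymm ?_ (Ideal.span_le.mpr ?_)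
  · have hjac : m ≤ (⊥ : Ideal (A511 k)).jacobson := maximalIdealOf_le_jacobson_bot
    refine Submodule.le_of_le_smul_of_le_jacobson_bot (hI ▸ Submodule.fg_span (by simp)) hjac ?_
    rw [Ideal.smul_eq_mul]
    nth_rewrite 1 [hI]
    exact Ideal.span_le.mpr (Set.pair_subset hfJ hgJ)
  · simp only [Set.insert_subset_iff, Set.singleton_subset_iff, SetLike.mem_coe]
    exact ⟨sub_mem (I.smul_of_tower_mem _ hfI) hzfI, sub_mem (I.smul_of_tower_mem _ hgI) hzgI⟩

theorem subset_valueSet_of_sq_eq (hf : f ∈ I) (hg : g ∈ I)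
    (hred : I ^ 2 = Ideal.span {f} * I) (hof : order (f : k⟦X⟧) = 20)
    (hog : order (g : k⟦X⟧) = 26) : ({20, 26, 32, 38, 44} : Set ℕ) ⊆ valueSet I := by
  have h20 : 20 ∈ valueSet I := ⟨f, hf, hof⟩
  have h26 : 26 ∈ valueSet I := ⟨g, hg, hog⟩
  have h32 := mem_valueSet_of_sq_eq_span_mul hred hof h26 h26 (r := 32) rfl
  have h38 := mem_valueSet_of_sq_eq_span_mul hred hof h26 h32 (r := 38) rfl
  have h44 := mem_valueSet_of_sq_eq_span_mul hred hof h32 h32 (r := 44) rfl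
  simp [Set.insert_subset_iff, *]

theorem mem_of_coeff_lt_forty_eq_zero (hV : ({20, 26, 32, 38, 44} : Set ℕ) ⊆ valueSet I)
    (x : A511 k) (hx : ∀ n < 40, coeff n (x : k⟦X⟧) = 0) : x ∈ I := by
  refine mem_of_coeff_lt_eq_zero {20, 26, 32, 38, 44} (fun d hd => hV (by simpa using hd))
    (fun j hj => ?_) x hx
  refine ⟨20 + 6 * (j % 5), ?_, by omega, mem511 ((j - (20 + 6 * (j % 5))) / 5) 0 (by omega)⟩
  have := Nat.mod_lt j (show 0 < 5 by norm_num)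
  interval_cases j % 5 <;> simp

/-- These are the elements of `{20, 26, 32, 38, 44} + ⟨5, 11⟩` between 20 and 40. -/
theorem orders_lt_forty_subset_valueSet (hV : ({20, 26, 32, 38, 44} : Set ℕ) ⊆ valueSet I) :
    ({25, 26, 30, 31, 32, 35, 36, 37, 38} : Set ℕ) ⊆ valueSet I := by
  have hadd : ∀ m ∈ H, ∀ d ∈ ({20, 26, 32, 38, 44} : Set ℕ), m + d ∈ valueSet I :=
    fun m hm d hd => add_mem_valueSet (X_pow_mem k hm) (hV hd)
  simp only [Set.insert_subset_iff, Set.singleton_subset_iff]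
  exact ⟨hadd 5 (mem511 1 0 rfl) 20 (by simp), hV (by simp),
    hadd 10 (mem511 2 0 rfl) 20 (by simp), hadd 11 (mem511 0 1 rfl) 20 (by simp), hV (by simp),
    hadd 15 (mem511 3 0 rfl) 20 (by simp), hadd 10 (mem511 2 0 rfl) 26 (by simp),
    hadd 5 (mem511 1 0 rfl) 32 (by simp), hV (by simp)⟩

theorem exists_mem_inv_smul_sub_supported (hV : ({20, 26, 32, 38, 44} : Set ℕ) ⊆ valueSet I)
    {y : A511 k} {a : ℕ} (ha : order (y : k⟦X⟧) = a) (h20 : 20 ≤ a) :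
    ∃ z ∈ I, (∀ n ≤ a, coeff n (z : k⟦X⟧) = 0) ∧
      coeff a (((coeff a (y : k⟦X⟧))⁻¹ • y - z : A511 k) : k⟦X⟧) = 1 ∧
      ∀ n, coeff n (((coeff a (y : k⟦X⟧))⁻¹ • y - z : A511 k) : k⟦X⟧) ≠ 0 →
        n = a ∨ a < n ∧ n ∈ ({21, 22, 27, 33} : Finset ℕ) := by
  simp only [AddSubgroupClass.coe_sub, Subalgebra.coe_smul]
  obtain ⟨hy_a, hy_lt⟩ := order_eq_nat.mp ha
  obtain ⟨z, hzI, hz_lt, hz⟩ := exists_mem_coeff_sub_eq_zero (mem_of_coeff_lt_forty_eq_zero hV)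
    (orders_lt_forty_subset_valueSet hV) ((coeff a (y : k⟦X⟧))⁻¹ • y) (a + 1)
  refine ⟨z, hzI, fun n hn => hz_lt n (by omega), ?_, fun n hn => ?_⟩
  · simp [hz_lt a (by omega), hy_a]
  rcases lt_trichotomy n a with hna | rfl | hna
  · simp [hy_lt n hna, hz_lt n (by omega)] at hn
  · exact Or.inl rfl
  · refine Or.inr ⟨hna, ?_⟩
    have hnH : n ∈ H := sub_mem (Subalgebra.smul_mem _ y.2 _) z.2 n hn
    by_contra hnF
    refine hn (hz n (by omega) ?_)
    by_cases h40 : 40 ≤ n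
    · exact Or.inr h40
    · have := mem_of_mem_closure_five_eleven_of_lt_forty hnH (by omega)
      simp only [Finset.mem_insert, Finset.mem_singleton] at this hnF
      simp only [Set.mem_insert_iff, Set.mem_singleton_iff]
      omega

theorem genF_eq {F : A511 k} (h20 : coeff 20 (F : k⟦X⟧) = 1)
    (hF : ∀ n, coeff n (F : k⟦X⟧) ≠ 0 → n = 20 ∨ 20 < n ∧ n ∈ ({21, 22, 27, 33} : Finset ℕ)) :
    genF k (coeff 21 (F : k⟦X⟧)) (coeff 22 (F : k⟦X⟧)) (coeff 27 (F : k⟦X⟧))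
      (coeff 33 (F : k⟦X⟧)) = F := by
  refine Subtype.ext ((eq_sum_coeff_smul_X_pow {20, 21, 22, 27, 33} fun n hn => ?_).trans ?_).symm
  · rcases hF n hn with rfl | ⟨-, h⟩ <;> simp_all
  · simp [h20, genF, add_assoc]

theorem genG_eq {G : A511 k} (h26 : coeff 26 (G : k⟦X⟧) = 1)
    (hG : ∀ n, coeff n (G : k⟦X⟧) ≠ 0 → n = 26 ∨ 26 < n ∧ n ∈ ({21, 22, 27, 33} : Finset ℕ)) :
    genG k (coeff 27 (G : k⟦X⟧)) (coeff 33 (G : k⟦X⟧)) = G := by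
  refine Subtype.ext ((eq_sum_coeff_smul_X_pow {26, 27, 33} fun n hn => ?_).trans ?_).symm
  · rcases hG n hn with rfl | ⟨h, h'⟩
    · simp
    · simp at h' ⊢; omega
  · simp [h26, genG, add_assoc]

theorem elt32_eq {E : A511 k} (h32 : coeff 32 (E : k⟦X⟧) = 1)
    (hE : ∀ n, coeff n (E : k⟦X⟧) ≠ 0 → n = 32 ∨ 32 < n ∧ n ∈ ({21, 22, 27, 33} : Finset ℕ)) :
    elt32 k (coeff 33 (E : k⟦X⟧)) = E := by
  refine Subtype.ext ((eq_sum_coeff_smul_X_pow {32, 33} fun n hn => ?_).trans ?_).symm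
  · rcases hE n hn with rfl | ⟨h, h'⟩
    · simp
    · simp at h' ⊢; omega
  · simp [h32, elt32]

end FiveEleven

theorem ulrich_ideal_511_orders_20_26_form (I : Ideal (A511 k)) (f g : A511 k)
    (hf : f ∈ I) (hg : g ∈ I)
    (hI : I = Ideal.span {f, g}) (hred : I ^ 2 = Ideal.span {f} * I)
    (hof : order (f : PowerSeries k) = 20) (hog : order (g : PowerSeries k) = 26) :
    ∃ α₁ α₂ α₃ α₄ β₁ β₂ ε : k,
      I = Ideal.span {genF k α₁ α₂ α₃ α₄, genG k β₁ β₂} ∧ elt32 k ε ∈ I := by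
  have hV := subset_valueSet_of_sq_eq hf hg hred hof hog
  obtain ⟨h, hhI, hoh⟩ : 32 ∈ valueSet I := hV (by simp)
  obtain ⟨zf, hzfI, hzf, hF1, hF⟩ := exists_mem_inv_smul_sub_supported hV hof le_rfl
  obtain ⟨zg, hzgI, hzg, hG1, hG⟩ := exists_mem_inv_smul_sub_supported hV hog (by norm_num)
  obtain ⟨zh, hzhI, -, hE1, hE⟩ := exists_mem_inv_smul_sub_supported hV hoh (by norm_num)
  set F := (coeff 20 (f : k⟦X⟧))⁻¹ • f - zf
  set G := (coeff 26 (g : k⟦X⟧))⁻¹ • g - zg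
  set E := (coeff 32 (h : k⟦X⟧))⁻¹ • h - zh
  refine ⟨coeff 21 (F : k⟦X⟧), coeff 22 (F : k⟦X⟧), coeff 27 (F : k⟦X⟧), coeff 33 (F : k⟦X⟧),
    coeff 27 (G : k⟦X⟧), coeff 33 (G : k⟦X⟧), coeff 33 (E : k⟦X⟧), ?_, ?_⟩
  · rw [genF_eq hF1 hF, genG_eq hG1 hG]
    exact eq_span_inv_smul_sub hI hof hog hzfI hzgI (hzf 20 le_rfl) hzg
  · rw [elt32_eq hE1 hE]
    exact sub_mem (I.smul_of_tower_mem _ hhI) hzhI
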